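/- arXiv:1011.1724 — 3 statements merged into one kernel-verified Lean document; each statement's English description precedes it below -/
import Mathlib

section
/- Let γ be real and (σ_N) a sequence of reals with σ_N > −1 and N·σ_N → γ as N → ∞. Let i_N be integers with 0 ≤ i_N ≤ N and i_N/N → x for some x ∈ [0,1]. Then lim_{N→∞} N² · Σ_{j=0}^{N} p_{N,σ_N}(i_N, j) · (j/N − i_N/N)² = 2·x·(1−x). If i_N = ⌊Nx⌋, the convergence is uniform in x for 0 ≤ x ≤ 1. -/
open Filter

/-- The Moran transition function `p_{N,σ}` on `{0,1,…,N}` (zero off `{0,…,N}²` except as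
specified): `p(0,0) = p(N,N) = 1`, boundary states are absorbing, and for `0 < i < N`:
`p(i,i+1) = (1+σ)(i/N)(1−i/N)/(1+σ i/N)`, `p(i,i−1) = (i/N)(1−i/N)/(1+σ i/N)`,
`p(i,i) = 1 − p(i,i+1) − p(i,i−1)`. -/
noncomputable def moranP (N : ℕ) (σ : ℝ) (i j : ℕ) : ℝ :=
  if i = 0 ∨ i = N then (if j = i then 1 else 0)
  else if j = i + 1 then
    (1 + σ) * ((i : ℝ) / N) * (1 - (i : ℝ) / N) / (1 + σ * ((i : ℝ) / N))
  else if j + 1 = i then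
    ((i : ℝ) / N) * (1 - (i : ℝ) / N) / (1 + σ * ((i : ℝ) / N))
  else if j = i then
    1 - (1 + σ) * ((i : ℝ) / N) * (1 - (i : ℝ) / N) / (1 + σ * ((i : ℝ) / N))
      - ((i : ℝ) / N) * (1 - (i : ℝ) / N) / (1 + σ * ((i : ℝ) / N))
  else 0


/-!
Only the steps to `i ± 1` move the chain, each by `1/N`, so `N²` times the second moment is
`p(i,i+1) + p(i,i-1) = (2 + σ) r (1 - r) / (1 + σ r)` with `r = i/N`. This expression is continuous
at `σ = 0`, where it equals `2 r (1 - r)`, and `σ_N → 0` because `N σ_N` converges. For the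
uniform statement, `⌊N y⌋ / N` lies within `1/N` of `y`, so the values converge jointly as
`(N, y) → (∞, x)` inside `[0, 1]`, which on a compact set is uniform convergence.
-/

open Topology

theorem IsCompact.tendstoUniformlyOn_of_tendsto_prod_nhdsWithin {ι α β : Type*}
    [TopologicalSpace α] [UniformSpace β] {F : ι → α → β} {f : α → β} {p : Filter ι}
    {s : Set α} (hs : IsCompact s) (hf : ContinuousOn f s)
    (h : ∀ x ∈ s, Tendsto (fun q : ι × α => F q.1 q.2) (p ×ˢ 𝓝[s] x) (𝓝 (f x))) :
    TendstoUniformlyOn F f p s := by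
  refine (tendstoLocallyUniformlyOn_iff_tendstoUniformlyOn_of_compact hs).1 ?_
  refine tendstoLocallyUniformlyOn_iff_forall_tendsto.2 fun x hx => ?_
  exact (((hf x hx).tendsto.comp tendsto_snd).prodMk_nhds (h x hx)).mono_right
    (nhds_le_uniformity (f x))

theorem tendsto_zero_of_tendsto_natCast_mul {u : ℕ → ℝ} {γ : ℝ}
    (h : Tendsto (fun n : ℕ => (n : ℝ) * u n) atTop (𝓝 γ)) : Tendsto u atTop (𝓝 0) := by
  refine (zero_mul γ ▸ tendsto_inv_atTop_nhds_zero_nat.mul h).congr' ?_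
  filter_upwards [eventually_ne_atTop 0] with n hn
  field_simp

theorem abs_natFloor_mul_div_sub_le {n : ℕ} (hn : 0 < n) {y : ℝ} (hy : 0 ≤ y) :
    |(⌊(n : ℝ) * y⌋₊ : ℝ) / n - y| ≤ 1 / n := by
  have hn' : (0 : ℝ) < n := by exact_mod_cast hn
  have h : (⌊(n : ℝ) * y⌋₊ : ℝ) / n - y = (⌊(n : ℝ) * y⌋₊ - n * y) / n := by field_simp
  rw [h, abs_div, abs_of_pos hn', div_le_div_iff_of_pos_right hn', abs_le]
  constructor
  · linarith [Nat.lt_floor_add_one ((n : ℝ) * y)]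
  · linarith [Nat.floor_le (mul_nonneg hn'.le hy)]

theorem tendsto_natFloor_mul_div_nhdsWithin_Ici (x : ℝ) :
    Tendsto (fun q : ℕ × ℝ => (⌊(q.1 : ℝ) * q.2⌋₊ : ℝ) / q.1)
      (atTop ×ˢ 𝓝[Set.Ici 0] x) (𝓝 x) := by
  have hy : Tendsto (fun q : ℕ × ℝ => q.2) (atTop ×ˢ 𝓝[Set.Ici 0] x) (𝓝 x) :=
    tendsto_nhdsWithin_of_tendsto_nhds tendsto_id |>.comp tendsto_snd
  have hdiff : Tendsto (fun q : ℕ × ℝ => (⌊(q.1 : ℝ) * q.2⌋₊ : ℝ) / q.1 - q.2)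
      (atTop ×ˢ 𝓝[Set.Ici 0] x) (𝓝 0) := by
    refine squeeze_zero_norm' ?_ (tendsto_one_div_atTop_nhds_zero_nat.comp tendsto_fst)
    filter_upwards [(eventually_gt_atTop 0).prod_mk eventually_mem_nhdsWithin] with q hq
    exact abs_natFloor_mul_div_sub_le hq.1 hq.2
  simpa using hdiff.add hy

noncomputable def moranScaledVariance (σ r : ℝ) : ℝ := (2 + σ) * r * (1 - r) / (1 + σ * r)

theorem moranScaledVariance_zero_left (r : ℝ) : moranScaledVariance 0 r = 2 * r * (1 - r) := by
  simp [moranScaledVariance]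

theorem continuousAt_moranScaledVariance_zero (x : ℝ) :
    ContinuousAt (fun q : ℝ × ℝ => moranScaledVariance q.1 q.2) (0, x) := by
  unfold moranScaledVariance
  fun_prop (disch := simp)

theorem moranP_mul_sq_eq_zero_of_boundary {N : ℕ} {σ : ℝ} {i : ℕ} (hi : i = 0 ∨ i = N) (j : ℕ) :
    moranP N σ i j * ((j : ℝ) / N - (i : ℝ) / N) ^ 2 = 0 := by
  rw [moranP, if_pos hi]
  split_ifs with hj <;> simp [hj]

theorem moranP_mul_sq_eq_zero_of_ne {N : ℕ} {σ : ℝ} {i j : ℕ} (hj : j ≠ i - 1) (hj' : j ≠ i + 1) :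
    moranP N σ i j * ((j : ℝ) / N - (i : ℝ) / N) ^ 2 = 0 := by
  rw [moranP]
  split_ifs <;> first | omega | simp_all

theorem moranP_scaled_second_moment {N : ℕ} (σ : ℝ) {i : ℕ} (hi : i ≤ N) :
    (N : ℝ) ^ 2 * ∑ j ∈ Finset.range (N + 1), moranP N σ i j * ((j : ℝ) / N - (i : ℝ) / N) ^ 2
      = moranScaledVariance σ (i / N) := by
  by_cases hb : i = 0 ∨ i = N
  · have hr : (i : ℝ) / N * (1 - i / N) = 0 := by
      rcases hb with rfl | rfl
      · simp
      · rcases Nat.eq_zero_or_pos i with rfl | hpos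
        · simp
        · simp [div_self (Nat.cast_ne_zero (R := ℝ) |>.2 hpos.ne')]
    simp [moranScaledVariance, moranP_mul_sq_eq_zero_of_boundary hb, mul_assoc, hr]
  obtain ⟨hi0, hiN⟩ := not_or.1 hb
  have hsub : ({i - 1, i + 1} : Finset ℕ) ⊆ Finset.range (N + 1) := by
    intro j hj
    simp only [Finset.mem_insert, Finset.mem_singleton] at hj
    rw [Finset.mem_range]
    omega
  rw [← Finset.sum_subset hsub fun j _ hj => by
      simp only [Finset.mem_insert, Finset.mem_singleton, not_or] at hj
      exact moranP_mul_sq_eq_zero_of_ne hj.1 hj.2,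
    Finset.sum_pair (by omega)]
  have hpred : moranP N σ i (i - 1) = (i / N) * (1 - i / N) / (1 + σ * (i / N)) := by
    rw [moranP, if_neg (by omega), if_neg (by omega), if_pos (by omega)]
  have hsucc : moranP N σ i (i + 1) = (1 + σ) * (i / N) * (1 - i / N) / (1 + σ * (i / N)) := by
    rw [moranP, if_neg (by omega), if_pos rfl]
  have hN : (N : ℝ) ≠ 0 := Nat.cast_ne_zero.2 (by omega)
  rw [hpred, hsucc, moranScaledVariance]
  push_cast [Nat.one_le_iff_ne_zero.2 hi0]
  field_simp
  ring

theorem moran_variance_limit_general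
    (γ : ℝ) (σ : ℕ → ℝ)
    (hσγ : Tendsto (fun N : ℕ => (N : ℝ) * σ N) atTop (nhds γ))
    (i : ℕ → ℕ) (hi : ∀ N, i N ≤ N)
    (x : ℝ)
    (hix : Tendsto (fun N : ℕ => (i N : ℝ) / N) atTop (nhds x)) :
    Tendsto (fun N : ℕ => (N : ℝ) ^ 2 *
        ∑ j ∈ Finset.range (N + 1),
          moranP N (σ N) (i N) j * ((j : ℝ) / N - (i N : ℝ) / N) ^ 2)
      atTop (nhds (2 * x * (1 - x)))
    ∧ TendstoUniformlyOn
        (fun (N : ℕ) (y : ℝ) => (N : ℝ) ^ 2 *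
          ∑ j ∈ Finset.range (N + 1),
            moranP N (σ N) ⌊(N : ℝ) * y⌋₊ j *
              ((j : ℝ) / N - (⌊(N : ℝ) * y⌋₊ : ℝ) / N) ^ 2)
        (fun y => 2 * y * (1 - y)) atTop (Set.Icc 0 1) := by
  have hσ0 := tendsto_zero_of_tendsto_natCast_mul hσγ
  have hlim (y : ℝ) := moranScaledVariance_zero_left y ▸
    (continuousAt_moranScaledVariance_zero y).tendsto
  refine ⟨?_, isCompact_Icc.tendstoUniformlyOn_of_tendsto_prod_nhdsWithin (by fun_prop)
    fun y _ => ?_⟩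
  · simp_rw [moranP_scaled_second_moment _ (hi _)]
    exact (hlim x).comp (hσ0.prodMk_nhds hix)
  · have hfloor : Tendsto (fun q : ℕ × ℝ => (⌊(q.1 : ℝ) * q.2⌋₊ : ℝ) / q.1)
        (atTop ×ˢ 𝓝[Set.Icc 0 1] y) (𝓝 y) :=
      (tendsto_natFloor_mul_div_nhdsWithin_Ici y).mono_left
        (prod_mono le_rfl (nhdsWithin_mono _ Set.Icc_subset_Ici_self))
    refine ((hlim y).comp ((hσ0.comp tendsto_fst).prodMk_nhds hfloor)).congr' ?_
    filter_upwards [eventually_mem_nhdsWithin.prod_inr _] with q hq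
    have hle : ⌊(q.1 : ℝ) * q.2⌋₊ ≤ q.1 :=
      Nat.floor_le_of_le (mul_le_of_le_one_right q.1.cast_nonneg hq.2)
    exact (moranP_scaled_second_moment _ hle).symm

/-- the scaled one-step second moment of the Moran chain increment converges
to the Wright–Fisher infinitesimal variance `2 x (1−x)`, uniformly in `x` when
`i_N = ⌊Nx⌋`. -/
theorem moran_variance_limit
    (γ : ℝ) (σ : ℕ → ℝ) (hσ : ∀ N, σ N > -1)
    (hσγ : Tendsto (fun N : ℕ => (N : ℝ) * σ N) atTop (nhds γ))
    (i : ℕ → ℕ) (hi : ∀ N, i N ≤ N)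
    (x : ℝ) (hx : x ∈ Set.Icc (0 : ℝ) 1)
    (hix : Tendsto (fun N : ℕ => (i N : ℝ) / N) atTop (nhds x)) :
    Tendsto (fun N : ℕ => (N : ℝ) ^ 2 *
        ∑ j ∈ Finset.range (N + 1),
          moranP N (σ N) (i N) j * ((j : ℝ) / N - (i N : ℝ) / N) ^ 2)
      atTop (nhds (2 * x * (1 - x)))
    ∧ TendstoUniformlyOn
        (fun (N : ℕ) (y : ℝ) => (N : ℝ) ^ 2 *
          ∑ j ∈ Finset.range (N + 1),
            moranP N (σ N) ⌊(N : ℝ) * y⌋₊ j *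
              ((j : ℝ) / N - (⌊(N : ℝ) * y⌋₊ : ℝ) / N) ^ 2)
        (fun y => 2 * y * (1 - y)) atTop (Set.Icc 0 1) :=
  moran_variance_limit_general γ σ hσγ i hi x hix
end

section
/- Let γ be real and (σ_N) a sequence of reals with σ_N > −1 and N·σ_N → γ as N → ∞. Then for every function h that is twice continuously differentiable on [0,1], lim_{N→∞} sup_{x∈[0,1]} | N²·( Σ_{j=0}^{N} p_{N,σ_N}(⌊Nx⌋, j)·h(j/N) − h(⌊Nx⌋/N) ) − ( x(1−x)h''(x) + γ x(1−x)h'(x) ) | = 0. -/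
open Filter

/-!
At an interior state `i` with `y = i/N` the chain jumps down with probability
`q = y(1-y)/(1+σy)` and up with probability `(1+σ)q`, so
`N² (∑ⱼ p(i,j) h(j/N) - h(y)) = q · (N²Δ²h(y) + Nσ · NΔh(y))` with the centred second difference
`Δ²` and the forward difference `Δ` of step `1/N`. Taylor's theorem with a uniform modulus of
continuity of `h''` and `h'` on `[0,1]` makes both difference quotients converge uniformly;
moreover `⌊Nx⌋/N → x`, `σ_N → 0` (so `q → x(1-x)`) and `Nσ_N → γ`. At the absorbing states both
the generator and `q` vanish. Uniform convergence on `[0,1]` is handled as convergence to `0`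
along `atTop ×ˢ 𝓟 [0,1]` on `ℕ × ℝ`, where each error term is a vanishing factor times a bounded
one.
-/

open Set Topology Uniformity

theorem tendstoUniformlyOn_iff_tendsto_sub_nhds_zero {ι α β : Type*} [SeminormedAddCommGroup β]
    {F : ι → α → β} {f : α → β} {p : Filter ι} {s : Set α} :
    TendstoUniformlyOn F f p s ↔
      Tendsto (fun z : ι × α => F z.1 z.2 - f z.2) (p ×ˢ 𝓟 s) (𝓝 0) := by
  rw [tendstoUniformlyOn_iff_tendsto, tendsto_uniformity_iff_dist_tendsto_zero,
    tendsto_zero_iff_norm_tendsto_zero (f := fun z : ι × α => F z.1 z.2 - f z.2)]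
  simp_rw [dist_comm, dist_eq_norm]

theorem UniformContinuousOn.tendsto_comp_sub_comp {ι E F : Type*} [SeminormedAddCommGroup E]
    [SeminormedAddCommGroup F] {g : E → F} {s : Set E} (hg : UniformContinuousOn g s)
    {a b : ι → E} {l : Filter ι} (ha : ∀ᶠ z in l, a z ∈ s) (hb : ∀ᶠ z in l, b z ∈ s)
    (hab : Tendsto (fun z => a z - b z) l (𝓝 0)) :
    Tendsto (fun z => g (a z) - g (b z)) l (𝓝 0) := by
  have hpair : Tendsto (fun z => (a z, b z)) l (𝓤 E ⊓ 𝓟 (s ×ˢ s)) := by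
    refine tendsto_inf.2 ⟨?_, tendsto_principal.2 (ha.and hb)⟩
    rw [tendsto_uniformity_iff_dist_tendsto_zero]
    simpa only [dist_eq_norm] using tendsto_zero_iff_norm_tendsto_zero.1 hab
  rw [tendsto_zero_iff_norm_tendsto_zero]
  simpa only [dist_eq_norm, Function.comp_def] using
    tendsto_uniformity_iff_dist_tendsto_zero.1 (Tendsto.comp hg hpair)

theorem IsCompact.isBoundedUnder_norm_comp {ι α E : Type*} [TopologicalSpace α]
    [SeminormedAddCommGroup E] {K : Set α} (hK : IsCompact K) {g : α → E} (hg : ContinuousOn g K)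
    {b : ι → α} {l : Filter ι} (hb : ∀ᶠ z in l, b z ∈ K) :
    IsBoundedUnder (· ≤ ·) l (norm ∘ fun z => g (b z)) := by
  obtain ⟨C, hC⟩ := hK.exists_bound_of_continuousOn hg
  exact isBoundedUnder_of_eventually_le (hb.mono fun z hz => hC _ hz)

section Taylor

variable {ι : Type*} {l : Filter ι} {f f' f'' : ℝ → ℝ} {s : Set ℝ} {a u : ι → ℝ}

theorem Convex.abs_sub_sub_mul_le (hs : Convex ℝ s)
    (hf : ∀ t ∈ s, HasDerivWithinAt f (f' t) s t) {a b ε : ℝ} (ha : a ∈ s) (hb : b ∈ s)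
    (hf' : ∀ t ∈ s, |t - a| ≤ |b - a| → |f' t - f' a| ≤ ε) :
    |f b - f a - f' a * (b - a)| ≤ ε * |b - a| := by
  set s' := s ∩ Metric.closedBall a |b - a|
  have hmem : ∀ t, t ∈ s' ↔ t ∈ s ∧ |t - a| ≤ |b - a| := fun t => by
    simp [s', Real.dist_eq]
  have hg : ∀ t ∈ s', HasDerivWithinAt (fun t => f t - f' a * t) (f' t - f' a) s' t :=
    fun t ht => ((hf t ((hmem t).1 ht).1).mono inter_subset_left).sub
      (hasDerivAt_const_mul (f' a)).hasDerivWithinAt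
  have hbound : ∀ t ∈ s', ‖f' t - f' a‖ ≤ ε := fun t ht => hf' t ((hmem t).1 ht).1 ((hmem t).1 ht).2
  have := (hs.inter (convex_closedBall a _)).norm_image_sub_le_of_norm_hasDerivWithin_le hg
    hbound ((hmem a).2 ⟨ha, by simp⟩) ((hmem b).2 ⟨hb, le_rfl⟩)
  rw [Real.norm_eq_abs, Real.norm_eq_abs] at this
  calc |f b - f a - f' a * (b - a)| = |f b - f' a * b - (f a - f' a * a)| := by ring_nf
    _ ≤ ε * |b - a| := this

theorem Convex.abs_sub_sub_mul_sub_sq_le (hs : Convex ℝ s)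
    (hf : ∀ t ∈ s, HasDerivWithinAt f (f' t) s t) (hf' : ∀ t ∈ s, HasDerivWithinAt f' (f'' t) s t)
    {a b ε : ℝ} (ha : a ∈ s) (hb : b ∈ s)
    (hf'' : ∀ t ∈ s, |t - a| ≤ |b - a| → |f'' t - f'' a| ≤ ε) :
    |f b - f a - f' a * (b - a) - f'' a * (b - a) ^ 2 / 2| ≤ ε * (b - a) ^ 2 := by
  set s' := s ∩ Metric.closedBall a |b - a|
  have hmem : ∀ t, t ∈ s' ↔ t ∈ s ∧ |t - a| ≤ |b - a| := fun t => by
    simp [s', Real.dist_eq]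
  have hg : ∀ t ∈ s', HasDerivWithinAt (fun t => f t - f' a * t - f'' a * (t - a) ^ 2 / 2)
      (f' t - f' a - f'' a * (t - a)) s' t := by
    intro t ht
    have hq : HasDerivAt (fun t => f'' a * (t - a) ^ 2 / 2) (f'' a * (t - a)) t := by
      have := ((((hasDerivAt_id t).sub_const a).pow 2).const_mul (f'' a)).div_const 2
      exact this.congr_deriv (by simp only [id_eq]; push_cast; ring)
    exact (((hf t ((hmem t).1 ht).1).mono inter_subset_left).sub
      (hasDerivAt_const_mul (f' a)).hasDerivWithinAt).sub
      hq.hasDerivWithinAt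
  -- the derivative of the remainder is itself a first-order remainder, of size `ε |t - a|`
  have hbound : ∀ t ∈ s', ‖f' t - f' a - f'' a * (t - a)‖ ≤ ε * |b - a| := by
    intro t ht
    obtain ⟨hts, hta⟩ := (hmem t).1 ht
    calc ‖f' t - f' a - f'' a * (t - a)‖ ≤ ε * |t - a| :=
          hs.abs_sub_sub_mul_le hf' ha hts fun r hr hra => hf'' r hr (hra.trans hta)
      _ ≤ ε * |b - a| := by
          have : 0 ≤ ε := (abs_nonneg _).trans (hf'' a ha (by simp))
          gcongr
  have := (hs.inter (convex_closedBall a _)).norm_image_sub_le_of_norm_hasDerivWithin_le hg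
    hbound ((hmem a).2 ⟨ha, by simp⟩) ((hmem b).2 ⟨hb, le_rfl⟩)
  rw [Real.norm_eq_abs, Real.norm_eq_abs] at this
  calc |f b - f a - f' a * (b - a) - f'' a * (b - a) ^ 2 / 2|
      = |f b - f' a * b - f'' a * (b - a) ^ 2 / 2 -
          (f a - f' a * a - f'' a * (a - a) ^ 2 / 2)| := by
        ring_nf
    _ ≤ ε * |b - a| * |b - a| := this
    _ = ε * (b - a) ^ 2 := by rw [mul_assoc, abs_mul_abs_self, sq]

theorem tendsto_slope_sub_of_uniformContinuousOn (hs : Convex ℝ s)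
    (hf : ∀ t ∈ s, HasDerivWithinAt f (f' t) s t) (hf' : UniformContinuousOn f' s)
    (hu : Tendsto u l (𝓝 0)) (hu0 : ∀ᶠ z in l, u z ≠ 0)
    (hmem : ∀ᶠ z in l, a z ∈ s ∧ a z + u z ∈ s) :
    Tendsto (fun z => (f (a z + u z) - f (a z)) / u z - f' (a z)) l (𝓝 0) := by
  rw [Metric.tendsto_nhds]
  intro ε hε
  obtain ⟨δ, hδ, hδf'⟩ := Metric.uniformContinuousOn_iff_le.1 hf' (ε / 2) (half_pos hε)
  filter_upwards [hu0, hmem, Metric.tendsto_nhds.1 hu δ hδ] with z hz ⟨ha, hau⟩ huδ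
  rw [Real.dist_0_eq_abs] at huδ ⊢
  have hrem := hs.abs_sub_sub_mul_le hf ha hau fun t ht hta => by
    simpa only [Real.dist_eq] using hδf' t ht (a z) ha (by
      rw [add_sub_cancel_left] at hta; rw [Real.dist_eq]; linarith)
  rw [add_sub_cancel_left] at hrem
  calc |(f (a z + u z) - f (a z)) / u z - f' (a z)|
      = |f (a z + u z) - f (a z) - f' (a z) * u z| / |u z| := by
        rw [← abs_div]
        congr 1
        field_simp
    _ ≤ ε / 2 := by rwa [div_le_iff₀ (abs_pos.2 hz)]
    _ < ε := half_lt_self hε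

theorem tendsto_secondDiff_sub_of_uniformContinuousOn (hs : Convex ℝ s)
    (hf : ∀ t ∈ s, HasDerivWithinAt f (f' t) s t)
    (hf' : ∀ t ∈ s, HasDerivWithinAt f' (f'' t) s t) (hf'' : UniformContinuousOn f'' s)
    (hu : Tendsto u l (𝓝 0)) (hu0 : ∀ᶠ z in l, u z ≠ 0)
    (hmem : ∀ᶠ z in l, a z ∈ s ∧ a z + u z ∈ s ∧ a z - u z ∈ s) :
    Tendsto (fun z => (f (a z + u z) + f (a z - u z) - 2 * f (a z)) / u z ^ 2 - f'' (a z)) l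
      (𝓝 0) := by
  rw [Metric.tendsto_nhds]
  intro ε hε
  obtain ⟨δ, hδ, hδf''⟩ := Metric.uniformContinuousOn_iff_le.1 hf'' (ε / 4) (by positivity)
  filter_upwards [hu0, hmem, Metric.tendsto_nhds.1 hu δ hδ] with z hz ⟨ha, hau, ham⟩ huδ
  rw [Real.dist_0_eq_abs] at huδ ⊢
  have hmod : ∀ b, |b - a z| = |u z| → ∀ t ∈ s, |t - a z| ≤ |b - a z| →
      |f'' t - f'' (a z)| ≤ ε / 4 := fun b hb t ht hta => by
    simpa only [Real.dist_eq] using hδf'' t ht (a z) ha (by rw [Real.dist_eq]; linarith)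
  have hplus := hs.abs_sub_sub_mul_sub_sq_le hf hf' ha hau (hmod _ (by simp))
  have hminus := hs.abs_sub_sub_mul_sub_sq_le hf hf' ha ham (hmod _ (by simp))
  simp only [add_sub_cancel_left, sub_sub_cancel_left, neg_sq] at hplus hminus
  have hu2 : 0 < u z ^ 2 := by positivity
  calc |(f (a z + u z) + f (a z - u z) - 2 * f (a z)) / u z ^ 2 - f'' (a z)|
      = |(f (a z + u z) - f (a z) - f' (a z) * u z - f'' (a z) * u z ^ 2 / 2)
          + (f (a z - u z) - f (a z) - f' (a z) * -u z - f'' (a z) * u z ^ 2 / 2)| / u z ^ 2 := by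
        rw [← abs_of_pos hu2, ← abs_div, abs_of_pos hu2]
        congr 1
        field_simp
        ring
    _ ≤ (ε / 4 * u z ^ 2 + ε / 4 * u z ^ 2) / u z ^ 2 := by
        gcongr
        exact (abs_add_le _ _).trans (add_le_add hplus hminus)
    _ = ε / 2 := by field_simp; ring
    _ < ε := half_lt_self hε

end Taylor

noncomputable def moranDownProb (σ y : ℝ) : ℝ := y * (1 - y) / (1 + σ * y)

section MoranDownProb

variable {σ y : ℝ}

theorem one_add_mul_pos_of_mem_Icc (hσ : -1 < σ) (hy : y ∈ Icc 0 1) : 0 < 1 + σ * y := by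
  rcases hy.1.eq_or_lt with rfl | hy0
  · simp
  · nlinarith [mul_pos hy0 (neg_lt_iff_pos_add'.1 hσ), hy.2]

theorem moranDownProb_mem_Icc (hσ : -1 < σ) (hy : y ∈ Icc 0 1) : moranDownProb σ y ∈ Icc 0 1 := by
  have hpos := one_add_mul_pos_of_mem_Icc hσ hy
  obtain ⟨hy0, hy1⟩ := hy
  refine ⟨div_nonneg (mul_nonneg hy0 (sub_nonneg.2 hy1)) hpos.le, div_le_one_of_le₀ ?_ hpos.le⟩
  nlinarith

theorem moranDownProb_sub_mul_one_sub (hσ : -1 < σ) (hy : y ∈ Icc 0 1) :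
    moranDownProb σ y - y * (1 - y) = -(σ * (y * moranDownProb σ y)) := by
  have hq : moranDownProb σ y * (1 + σ * y) = y * (1 - y) :=
    div_mul_cancel₀ _ (one_add_mul_pos_of_mem_Icc hσ hy).ne'
  linear_combination hq

end MoranDownProb

theorem sum_moranP_mul_of_absorbing {N i : ℕ} (hi : i = 0 ∨ i = N) (σ : ℝ) (g : ℕ → ℝ) :
    ∑ j ∈ Finset.range (N + 1), moranP N σ i j * g j = g i := by
  have hterm : ∀ j, moranP N σ i j * g j = if j = i then g j else 0 := fun j => by
    simp only [moranP, if_pos hi]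
    split <;> simp
  rw [Finset.sum_congr rfl fun j _ => hterm j, Finset.sum_ite_eq', if_pos]
  simp only [Finset.mem_range]
  omega

theorem sum_moranP_mul_sub {N i : ℕ} (hi0 : 0 < i) (hiN : i < N) (σ : ℝ) (g : ℕ → ℝ) :
    ∑ j ∈ Finset.range (N + 1), moranP N σ i j * g j - g i =
      moranDownProb σ (i / N) * (g (i + 1) + g (i - 1) - 2 * g i + σ * (g (i + 1) - g i)) := by
  set q := moranDownProb σ (i / N)
  have hterm : ∀ j, moranP N σ i j * g j =
      (if j = i + 1 then (1 + σ) * q * g (i + 1) else 0) +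
        ((if j = i - 1 then q * g (i - 1) else 0) +
          (if j = i then (1 - (2 + σ) * q) * g i else 0)) := fun j => by
    simp only [moranP, q, moranDownProb, if_neg (by omega : ¬(i = 0 ∨ i = N))]
    split_ifs <;> first | (exfalso; omega) | (subst_vars; ring1) | (subst_vars; simp)
  have hmem : ∀ k ≤ i + 1, k ∈ Finset.range (N + 1) := fun k hk => by
    rw [Finset.mem_range]; omega
  rw [Finset.sum_congr rfl fun j _ => hterm j, Finset.sum_add_distrib, Finset.sum_add_distrib,
    Finset.sum_ite_eq', Finset.sum_ite_eq', Finset.sum_ite_eq', if_pos (hmem _ le_rfl),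
    if_pos (hmem _ (by omega)), if_pos (hmem _ (by omega))]
  ring

/-- The Moran generator divided by the down-jump probability `p(i, i-1) = moranDownProb σ (i/N)`,
as a function of the grid point `y = i/N`. -/
noncomputable def moranDiff (N : ℕ) (σ : ℝ) (h : ℝ → ℝ) (y : ℝ) : ℝ :=
  (h (y + (N : ℝ)⁻¹) + h (y - (N : ℝ)⁻¹) - 2 * h y) / ((N : ℝ)⁻¹) ^ 2 +
    N * σ * ((h (y + (N : ℝ)⁻¹) - h y) / (N : ℝ)⁻¹)

noncomputable def moranGenerator (N : ℕ) (σ : ℝ) (h : ℝ → ℝ) (i : ℕ) : ℝ :=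
  (N : ℝ) ^ 2 * (∑ j ∈ Finset.range (N + 1), moranP N σ i j * h ((j : ℝ) / N) - h ((i : ℝ) / N))

theorem moranGenerator_eq {N i : ℕ} (hN : 0 < N) (hi : i ≤ N) (σ : ℝ) (h : ℝ → ℝ) :
    moranGenerator N σ h i = moranDownProb σ (i / N) * moranDiff N σ h (i / N) := by
  have hN' : (N : ℝ) ≠ 0 := by positivity
  rcases (show i = 0 ∨ i = N ∨ (0 < i ∧ i < N) by omega) with hi0 | hiN | ⟨hi0, hiN⟩
  · rw [moranGenerator, sum_moranP_mul_of_absorbing (Or.inl hi0) σ fun j => h (j / N)]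
    simp [hi0, moranDownProb]
  · rw [moranGenerator, sum_moranP_mul_of_absorbing (Or.inr hiN) σ fun j => h (j / N)]
    simp [hiN, moranDownProb, hN']
  · rw [moranGenerator, sum_moranP_mul_sub hi0 hiN, moranDiff, Nat.cast_sub hi0]
    push_cast
    field_simp

noncomputable def gridPoint (N : ℕ) (x : ℝ) : ℝ := (⌊(N : ℝ) * x⌋₊ : ℝ) / N

def moranInterior : Set (ℕ × ℝ) := {z | 0 < ⌊(z.1 : ℝ) * z.2⌋₊ ∧ ⌊(z.1 : ℝ) * z.2⌋₊ < z.1}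

section Grid

variable {N : ℕ} {x : ℝ}

theorem natFloor_natCast_mul_le (hx : x ≤ 1) : ⌊(N : ℝ) * x⌋₊ ≤ N :=
  Nat.floor_le_of_le (mul_le_of_le_one_right (Nat.cast_nonneg N) hx)

theorem gridPoint_mem_Icc (hx : x ∈ Icc 0 1) : gridPoint N x ∈ Icc 0 1 :=
  ⟨by unfold gridPoint; positivity,
    div_le_one_of_le₀ (by exact_mod_cast natFloor_natCast_mul_le hx.2) (Nat.cast_nonneg N)⟩

theorem abs_gridPoint_sub_le (hN : 0 < N) (hx : 0 ≤ x) : |gridPoint N x - x| ≤ (N : ℝ)⁻¹ := by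
  have hN' : (0 : ℝ) < N := by exact_mod_cast hN
  have hfloor := Nat.floor_le (mul_nonneg hN'.le hx)
  have hceil := Nat.lt_floor_add_one ((N : ℝ) * x)
  have hsub : gridPoint N x - x = (⌊(N : ℝ) * x⌋₊ - N * x) * (N : ℝ)⁻¹ := by
    rw [gridPoint]; field_simp
  rw [hsub, abs_mul, abs_inv, abs_of_pos hN']
  exact mul_le_of_le_one_left (by positivity) (abs_le.2 ⟨by linarith, by linarith⟩)

theorem gridPoint_add_inv_mem_Icc (hz : (N, x) ∈ moranInterior) :
    gridPoint N x + (N : ℝ)⁻¹ ∈ Icc 0 1 ∧ gridPoint N x - (N : ℝ)⁻¹ ∈ Icc 0 1 := by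
  obtain ⟨hi0, hiN⟩ := hz
  have hN : (0 : ℝ) < N := by exact_mod_cast hi0.trans hiN
  have hi0' : (1 : ℝ) ≤ ⌊(N : ℝ) * x⌋₊ := by exact_mod_cast hi0
  have hiN' : (⌊(N : ℝ) * x⌋₊ : ℝ) + 1 ≤ N := by exact_mod_cast hiN
  rw [gridPoint, ← one_div, ← add_div, ← sub_div]
  exact ⟨⟨by positivity, (div_le_one hN).2 hiN'⟩,
    ⟨div_nonneg (by linarith) hN.le, (div_le_one hN).2 (by linarith)⟩⟩

theorem moranDownProb_gridPoint_eq_zero (σ : ℝ) (hN : 0 < N) (hx : x ≤ 1)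
    (hb : (N, x) ∉ moranInterior) : moranDownProb σ (gridPoint N x) = 0 := by
  have hN' : (N : ℝ) ≠ 0 := by exact_mod_cast hN.ne'
  have hi := natFloor_natCast_mul_le (N := N) hx
  simp only [moranInterior, mem_ofPred_eq] at hb
  rcases (show ⌊(N : ℝ) * x⌋₊ = 0 ∨ ⌊(N : ℝ) * x⌋₊ = N by omega) with hi0 | hiN
  · simp [gridPoint, moranDownProb, hi0]
  · simp [gridPoint, moranDownProb, hiN, hN']

end Grid

section UnitIntervalFilter

variable {γ : ℝ} {σ : ℕ → ℝ} {h h' h'' : ℝ → ℝ}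

theorem eventually_pos_mem_Icc :
    ∀ᶠ z in (atTop : Filter ℕ) ×ˢ 𝓟 (Icc (0 : ℝ) 1), 0 < z.1 ∧ z.2 ∈ Icc 0 1 :=
  (eventually_gt_atTop 0).prod_mk (mem_principal_self _)

theorem tendsto_gridPoint_sub :
    Tendsto (fun z : ℕ × ℝ => gridPoint z.1 z.2 - z.2) (atTop ×ˢ 𝓟 (Icc 0 1)) (𝓝 0) :=
  squeeze_zero_norm' (eventually_pos_mem_Icc.mono fun _ hz => abs_gridPoint_sub_le hz.1 hz.2.1)
    (tendsto_inv_atTop_nhds_zero_nat.comp tendsto_fst)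

theorem tendsto_moranDownProb_sub (hσ : ∀ N, -1 < σ N) (hσ0 : Tendsto σ atTop (𝓝 0)) :
    Tendsto (fun z : ℕ × ℝ => moranDownProb (σ z.1) (gridPoint z.1 z.2) - z.2 * (1 - z.2))
      (atTop ×ˢ 𝓟 (Icc 0 1)) (𝓝 0) := by
  have hbound : ∀ᶠ z in (atTop : Filter ℕ) ×ˢ 𝓟 (Icc (0 : ℝ) 1),
      ‖gridPoint z.1 z.2 * moranDownProb (σ z.1) (gridPoint z.1 z.2)‖ ≤ 1 :=
    eventually_pos_mem_Icc.mono fun z hz => by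
      obtain ⟨hy0, hy1⟩ := gridPoint_mem_Icc (N := z.1) hz.2
      obtain ⟨hq0, hq1⟩ := moranDownProb_mem_Icc (hσ z.1) (gridPoint_mem_Icc hz.2)
      rw [Real.norm_eq_abs, abs_of_nonneg (mul_nonneg hy0 hq0)]
      exact mul_le_one₀ hy1 hq0 hq1
  have hdrift := ((hσ0.comp tendsto_fst).zero_mul_isBoundedUnder_le
    (isBoundedUnder_of_eventually_le hbound)).neg
  have hvar := (isCompact_Icc.uniformContinuousOn_of_continuous
    (show Continuous fun t : ℝ => t * (1 - t) by fun_prop).continuousOn).tendsto_comp_sub_comp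
    (eventually_pos_mem_Icc.mono fun z hz => gridPoint_mem_Icc hz.2)
    (eventually_pos_mem_Icc.mono fun z hz => hz.2) tendsto_gridPoint_sub
  have hsum := hdrift.add hvar
  rw [neg_zero, add_zero] at hsum
  refine hsum.congr' (eventually_pos_mem_Icc.mono fun z hz => ?_)
  simp only [Function.comp_apply]
  rw [← moranDownProb_sub_mul_one_sub (hσ _) (gridPoint_mem_Icc hz.2)]
  ring

theorem tendsto_moranDiff_sub (hσγ : Tendsto (fun N : ℕ => (N : ℝ) * σ N) atTop (𝓝 γ))
    (hd : ∀ t ∈ Icc 0 1, HasDerivWithinAt h (h' t) (Icc 0 1) t)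
    (hd' : ∀ t ∈ Icc 0 1, HasDerivWithinAt h' (h'' t) (Icc 0 1) t)
    (hc : ContinuousOn h'' (Icc 0 1)) :
    Tendsto (fun z : ℕ × ℝ => moranDiff z.1 (σ z.1) h (gridPoint z.1 z.2) - (h'' z.2 + γ * h' z.2))
      (atTop ×ˢ 𝓟 (Icc 0 1) ⊓ 𝓟 moranInterior) (𝓝 0) := by
  set l := atTop ×ˢ 𝓟 (Icc (0 : ℝ) 1) ⊓ 𝓟 moranInterior
  have hl : l ≤ atTop ×ˢ 𝓟 (Icc 0 1) := inf_le_left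
  have hpos := eventually_pos_mem_Icc.filter_mono hl
  have hx : ∀ᶠ z in l, z.2 ∈ Icc 0 1 := hpos.mono fun _ hz => hz.2
  have hy : ∀ᶠ z in l, gridPoint z.1 z.2 ∈ Icc 0 1 := hx.mono fun _ hz => gridPoint_mem_Icc hz
  have hmem : ∀ᶠ z in l, gridPoint z.1 z.2 ∈ Icc 0 1 ∧ gridPoint z.1 z.2 + (z.1 : ℝ)⁻¹ ∈ Icc 0 1 ∧
      gridPoint z.1 z.2 - (z.1 : ℝ)⁻¹ ∈ Icc 0 1 :=
    hy.and (mem_inf_of_right (mem_principal_self _)) |>.mono fun _ hz =>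
      ⟨hz.1, gridPoint_add_inv_mem_Icc hz.2⟩
  have hu : Tendsto (fun z : ℕ × ℝ => (z.1 : ℝ)⁻¹) l (𝓝 0) :=
    (tendsto_inv_atTop_nhds_zero_nat.comp tendsto_fst).mono_left hl
  have hu0 : ∀ᶠ z in l, (z.1 : ℝ)⁻¹ ≠ 0 := hpos.mono fun _ hz => by simp [hz.1.ne']
  have huc' : UniformContinuousOn h' (Icc 0 1) := isCompact_Icc.uniformContinuousOn_of_continuous
    fun t ht => (hd' t ht).continuousWithinAt
  have huc'' := isCompact_Icc.uniformContinuousOn_of_continuous hc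
  have hD2 :=
    tendsto_secondDiff_sub_of_uniformContinuousOn (convex_Icc 0 1) hd hd' huc'' hu hu0 hmem
  have hD1 := tendsto_slope_sub_of_uniformContinuousOn (convex_Icc 0 1) hd huc' hu hu0
    (hmem.mono fun _ hz => ⟨hz.1, hz.2.1⟩)
  have hgrid := tendsto_gridPoint_sub.mono_left hl
  have ha : Tendsto (fun z : ℕ × ℝ => (z.1 : ℝ) * σ z.1) l (𝓝 γ) :=
    (hσγ.comp tendsto_fst).mono_left hl
  have hγ := (tendsto_sub_nhds_zero_iff.2 ha).zero_mul_isBoundedUnder_le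
    (isCompact_Icc.isBoundedUnder_norm_comp huc'.continuousOn hx)
  have hsum := ((hD2.add (huc''.tendsto_comp_sub_comp hy hx hgrid)).add
    ((ha.mul hD1).add (ha.mul (huc'.tendsto_comp_sub_comp hy hx hgrid)))).add hγ
  simp only [add_zero, mul_zero] at hsum
  refine hsum.congr fun z => ?_
  simp only [moranDiff]
  ring

-- At the absorbing states the second difference quotient samples `h` outside `[0, 1]`, but there
-- the factor `moranDownProb` vanishes.
theorem tendsto_moranDownProb_mul_moranDiff_sub (hσ : ∀ N, -1 < σ N)
    (hσγ : Tendsto (fun N : ℕ => (N : ℝ) * σ N) atTop (𝓝 γ))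
    (hd : ∀ t ∈ Icc 0 1, HasDerivWithinAt h (h' t) (Icc 0 1) t)
    (hd' : ∀ t ∈ Icc 0 1, HasDerivWithinAt h' (h'' t) (Icc 0 1) t)
    (hc : ContinuousOn h'' (Icc 0 1)) :
    Tendsto (fun z : ℕ × ℝ => moranDownProb (σ z.1) (gridPoint z.1 z.2) *
        (moranDiff z.1 (σ z.1) h (gridPoint z.1 z.2) - (h'' z.2 + γ * h' z.2)))
      (atTop ×ˢ 𝓟 (Icc 0 1)) (𝓝 0) := by
  classical
  refine (Tendsto.if (p := (· ∈ moranInterior)) ?_ ?_).congr fun z => ite_self _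
  · refine isBoundedUnder_le_mul_tendsto_zero (isBoundedUnder_of_eventually_le (a := 1) ?_)
      (tendsto_moranDiff_sub hσγ hd hd' hc)
    filter_upwards [eventually_pos_mem_Icc.filter_mono inf_le_left] with z hz
    obtain ⟨hq0, hq1⟩ := moranDownProb_mem_Icc (hσ z.1) (gridPoint_mem_Icc hz.2)
    show ‖moranDownProb (σ z.1) (gridPoint z.1 z.2)‖ ≤ 1
    rwa [Real.norm_eq_abs, abs_of_nonneg hq0]
  · refine tendsto_const_nhds.congr' ?_
    filter_upwards [eventually_pos_mem_Icc.filter_mono inf_le_left,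
      mem_inf_of_right (mem_principal_self _)] with z hz hzb
    rw [moranDownProb_gridPoint_eq_zero _ hz.1 hz.2.2 hzb, zero_mul]

theorem tendsto_moranGenerator_sub (hσ : ∀ N, -1 < σ N)
    (hσγ : Tendsto (fun N : ℕ => (N : ℝ) * σ N) atTop (𝓝 γ))
    (hd : ∀ t ∈ Icc 0 1, HasDerivWithinAt h (h' t) (Icc 0 1) t)
    (hd' : ∀ t ∈ Icc 0 1, HasDerivWithinAt h' (h'' t) (Icc 0 1) t)
    (hc : ContinuousOn h'' (Icc 0 1)) :
    Tendsto (fun z : ℕ × ℝ => moranGenerator z.1 (σ z.1) h ⌊(z.1 : ℝ) * z.2⌋₊ -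
        (z.2 * (1 - z.2) * h'' z.2 + γ * z.2 * (1 - z.2) * h' z.2))
      (atTop ×ˢ 𝓟 (Icc 0 1)) (𝓝 0) := by
  have hσ0 : Tendsto σ atTop (𝓝 0) := by
    have := hσγ.mul (tendsto_inv_atTop_nhds_zero_nat (𝕜 := ℝ))
    rw [mul_zero] at this
    exact this.congr' ((eventually_ne_atTop 0).mono fun N hN => by field_simp)
  have hqc := (tendsto_moranDownProb_sub hσ hσ0).zero_mul_isBoundedUnder_le
    (isCompact_Icc.isBoundedUnder_norm_comp (g := fun x => h'' x + γ * h' x)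
      (hc.add (continuousOn_const.mul fun t ht => (hd' t ht).continuousWithinAt))
      (eventually_pos_mem_Icc.mono fun _ hz => hz.2))
  have hsum := (tendsto_moranDownProb_mul_moranDiff_sub hσ hσγ hd hd' hc).add hqc
  rw [add_zero] at hsum
  refine hsum.congr' (eventually_pos_mem_Icc.mono fun z hz => ?_)
  beta_reduce
  rw [moranGenerator_eq hz.1 (natFloor_natCast_mul_le hz.2.2)]
  simp only [gridPoint]
  ring

end UnitIntervalFilter

/-- for every `h` twice continuously differentiable on `[0,1]`, the scaled
generator of the Moran chain applied to `h` converges uniformly on `[0,1]` to the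
Wright–Fisher generator `L h(x) = x(1−x)h''(x) + γ x(1−x)h'(x)`. -/
theorem moran_generator_limit
    (γ : ℝ) (σ : ℕ → ℝ) (hσ : ∀ N, σ N > -1)
    (hσγ : Tendsto (fun N : ℕ => (N : ℝ) * σ N) atTop (nhds γ))
    (h : ℝ → ℝ) (hh : ContDiffOn ℝ 2 h (Set.Icc 0 1)) :
    TendstoUniformlyOn
      (fun (N : ℕ) (x : ℝ) => (N : ℝ) ^ 2 *
        ((∑ j ∈ Finset.range (N + 1),
            moranP N (σ N) ⌊(N : ℝ) * x⌋₊ j * h ((j : ℝ) / N))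
          - h ((⌊(N : ℝ) * x⌋₊ : ℝ) / N)))
      (fun x =>
        x * (1 - x) * derivWithin (derivWithin h (Set.Icc 0 1)) (Set.Icc 0 1) x
          + γ * x * (1 - x) * derivWithin h (Set.Icc 0 1) x)
      atTop (Set.Icc 0 1) := by
  have hud : UniqueDiffOn ℝ (Icc (0 : ℝ) 1) := uniqueDiffOn_Icc one_pos
  have hh' : ContDiffOn ℝ 1 (derivWithin h (Icc 0 1)) (Icc 0 1) := hh.derivWithin hud le_rfl
  rw [tendstoUniformlyOn_iff_tendsto_sub_nhds_zero]
  exact tendsto_moranGenerator_sub hσ hσγ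
    (fun t ht => (hh.differentiableOn two_ne_zero t ht).hasDerivWithinAt)
    (fun t ht => (hh'.differentiableOn one_ne_zero t ht).hasDerivWithinAt)
    (hh'.derivWithin hud (m := 0) le_rfl).continuousOn
end

section
/- Let γ be real, s(x) = ∫₀ˣ e^{−γu} du, m′(y) = e^{γy}/(y(1−y)) for 0 < y < 1, and g(x,y) = (s(1) − s(max(x,y)))·s(min(x,y))/s(1). Then there exists a constant C, depending only on γ, with the following property: for every real λ > 0 and every measurable α : [0,1] → ℝ such that ∫₀¹ α(y)²·m′(y) dy = 1 and α(x) = λ·∫₀¹ g(x,y)·α(y)·m′(y) dy for all x ∈ [0,1], one has |α(x)| ≤ C·λ²·x·(1−x) for all x ∈ [0,1]. -/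
open MeasureTheory

/-- The scale function `s(x) = ∫₀ˣ e^{−γu} du`. -/
noncomputable def sFn (γ x : ℝ) : ℝ := ∫ u in (0 : ℝ)..x, Real.exp (-(γ * u))

/-- The speed density `m′(y) = e^{γy}/(y(1−y))`. -/
noncomputable def mDens (γ y : ℝ) : ℝ := Real.exp (γ * y) / (y * (1 - y))

/-- The Green function `g(x,y) = (s(1) − s(max x y)) s(min x y)/s(1)`. -/
noncomputable def gFn (γ x y : ℝ) : ℝ :=
  (sFn γ 1 - sFn γ (max x y)) * sFn γ (min x y) / sFn γ 1

/-!
The Green function is comparable to `min(x,y) (1 - max(x,y))`, which is bounded both by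
`x(1-x)` and by `√(x(1-x)) √(y(1-y))`, and `√(y(1-y)) m′(y) = e^{γy}/√(y(1-y))` is integrable
on `[0,1]`. Feeding the normalization `∫ α² m′ = 1` through `|α| ≤ 1 + α²` into the
eigen-equation with the second bound gives `|α(x)| ≤ C₁ λ √(x(1-x))`; feeding this back into
the eigen-equation with the first bound gives `|α(x)| ≤ C λ² x(1-x)`.
-/

open Set

section ScaleFunction

variable (γ : ℝ)

lemma exp_mul_le_exp_abs {u : ℝ} (hu : |u| ≤ 1) : Real.exp (γ * u) ≤ Real.exp |γ| :=
  Real.exp_le_exp.2 <| calc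
    γ * u ≤ |γ| * |u| := (le_abs_self _).trans (abs_mul γ u).le
    _ ≤ |γ| := mul_le_of_le_one_right (abs_nonneg γ) hu

lemma intervalIntegrable_exp_neg_mul (a b : ℝ) :
    IntervalIntegrable (fun u => Real.exp (-(γ * u))) volume a b :=
  (by fun_prop : Continuous fun u => Real.exp (-(γ * u))).intervalIntegrable a b

lemma sFn_sub_sFn (a b : ℝ) : sFn γ b - sFn γ a = ∫ u in a..b, Real.exp (-(γ * u)) :=
  intervalIntegral.integral_interval_sub_left (intervalIntegrable_exp_neg_mul γ 0 b)
    (intervalIntegrable_exp_neg_mul γ 0 a)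

lemma sFn_mono : Monotone (sFn γ) := fun a b hab => by
  have := sFn_sub_sFn γ a b ▸
    intervalIntegral.integral_nonneg hab fun u _ => (Real.exp_pos (-(γ * u))).le
  linarith

lemma sFn_nonneg {a : ℝ} (ha : 0 ≤ a) : 0 ≤ sFn γ a := by
  simpa [sFn] using sFn_mono γ ha

lemma sFn_one_pos : 0 < sFn γ 1 :=
  intervalIntegral.intervalIntegral_pos_of_pos (intervalIntegrable_exp_neg_mul γ 0 1)
    (fun _ => Real.exp_pos _) one_pos

lemma sFn_sub_le {a b : ℝ} (ha : 0 ≤ a) (hab : a ≤ b) (hb : b ≤ 1) :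
    sFn γ b - sFn γ a ≤ Real.exp |γ| * (b - a) := by
  have hbound : ∀ u ∈ uIoc a b, ‖Real.exp (-(γ * u))‖ ≤ Real.exp |γ| := by
    intro u hu
    rw [uIoc_of_le hab] at hu
    rw [Real.norm_eq_abs, abs_of_pos (Real.exp_pos _), ← mul_neg]
    exact exp_mul_le_exp_abs γ (by rw [abs_neg, abs_le]; constructor <;> linarith [hu.1, hu.2])
  have := intervalIntegral.norm_integral_le_of_norm_le_const hbound
  rw [← sFn_sub_sFn, Real.norm_eq_abs, abs_of_nonneg (sub_nonneg.2 hab)] at this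
  exact (le_abs_self _).trans this

end ScaleFunction

lemma min_mul_one_sub_max_le {x y : ℝ} (hx : x ∈ Icc (0 : ℝ) 1) (hy : y ≤ 1) :
    min x y * (1 - max x y) ≤ x * (1 - x) := by
  have hmax : max x y ≤ 1 := max_le hx.2 hy
  calc min x y * (1 - max x y) ≤ x * (1 - max x y) :=
        mul_le_mul_of_nonneg_right (min_le_left x y) (by linarith)
    _ ≤ x * (1 - x) := mul_le_mul_of_nonneg_left (by linarith [le_max_left x y]) hx.1

lemma min_mul_one_sub_max_le_sqrt {x y : ℝ} (hx : x ∈ Icc (0 : ℝ) 1) (hy : y ∈ Icc (0 : ℝ) 1) :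
    min x y * (1 - max x y) ≤ √(x * (1 - x)) * √(y * (1 - y)) := by
  have hxy := min_mul_one_sub_max_le hx hy.2
  have hyx : min x y * (1 - max x y) ≤ y * (1 - y) := by
    rw [min_comm, max_comm]; exact min_mul_one_sub_max_le hy hx.2
  have hnonneg : 0 ≤ min x y * (1 - max x y) :=
    mul_nonneg (le_min hx.1 hy.1) (by linarith [max_le hx.2 hy.2])
  rw [← Real.sqrt_mul (by nlinarith [hx.1, hx.2]), Real.le_sqrt hnonneg (by nlinarith [hy.1, hy.2]), sq]
  exact mul_le_mul hxy hyx hnonneg (hnonneg.trans hxy)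

noncomputable def gFnBound (γ : ℝ) : ℝ := Real.exp |γ| ^ 2 / sFn γ 1

lemma gFnBound_nonneg (γ : ℝ) : 0 ≤ gFnBound γ :=
  div_nonneg (sq_nonneg _) (sFn_one_pos γ).le

section GreenFunction

variable (γ : ℝ) {x y : ℝ}

lemma gFn_nonneg (hx : x ∈ Icc (0 : ℝ) 1) (hy : y ∈ Icc (0 : ℝ) 1) : 0 ≤ gFn γ x y :=
  div_nonneg (mul_nonneg (sub_nonneg.2 (sFn_mono γ (max_le hx.2 hy.2)))
    (sFn_nonneg γ (le_min hx.1 hy.1))) (sFn_one_pos γ).le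

lemma gFn_le (hx : x ∈ Icc (0 : ℝ) 1) (hy : y ∈ Icc (0 : ℝ) 1) :
    gFn γ x y ≤ gFnBound γ * (min x y * (1 - max x y)) := by
  have hmin : 0 ≤ min x y := le_min hx.1 hy.1
  have hmax : max x y ≤ 1 := max_le hx.2 hy.2
  have hright := sFn_sub_le γ (hx.1.trans (le_max_left x y)) hmax le_rfl
  have hleft : sFn γ (min x y) ≤ Real.exp |γ| * min x y := by
    simpa [sFn] using sFn_sub_le γ le_rfl hmin ((min_le_left x y).trans hx.2)
  have hnum : (sFn γ 1 - sFn γ (max x y)) * sFn γ (min x y) ≤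
      Real.exp |γ| ^ 2 * (min x y * (1 - max x y)) := by
    calc _ ≤ (Real.exp |γ| * (1 - max x y)) * (Real.exp |γ| * min x y) :=
          mul_le_mul hright hleft (sFn_nonneg γ hmin)
            (mul_nonneg (Real.exp_pos _).le (by linarith))
      _ = _ := by ring
  calc gFn γ x y ≤ Real.exp |γ| ^ 2 * (min x y * (1 - max x y)) / sFn γ 1 :=
        div_le_div_of_nonneg_right hnum (sFn_one_pos γ).le
    _ = _ := by rw [gFnBound]; ring

lemma gFn_le_mul_one_sub (hx : x ∈ Icc (0 : ℝ) 1) (hy : y ∈ Icc (0 : ℝ) 1) :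
    gFn γ x y ≤ gFnBound γ * (x * (1 - x)) :=
  (gFn_le γ hx hy).trans
    (mul_le_mul_of_nonneg_left (min_mul_one_sub_max_le hx hy.2) (gFnBound_nonneg γ))

lemma gFn_le_sqrt (hx : x ∈ Icc (0 : ℝ) 1) (hy : y ∈ Icc (0 : ℝ) 1) :
    gFn γ x y ≤ gFnBound γ * (√(x * (1 - x)) * √(y * (1 - y))) :=
  (gFn_le γ hx hy).trans
    (mul_le_mul_of_nonneg_left (min_mul_one_sub_max_le_sqrt hx hy) (gFnBound_nonneg γ))

end GreenFunction

noncomputable def sqrtMDens (γ y : ℝ) : ℝ := √(y * (1 - y)) * mDens γ y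

lemma mDens_nonneg (γ : ℝ) {y : ℝ} (hy : y ∈ Icc (0 : ℝ) 1) : 0 ≤ mDens γ y :=
  div_nonneg (Real.exp_pos _).le (mul_nonneg hy.1 (by linarith [hy.2]))

lemma sqrtMDens_nonneg (γ : ℝ) {y : ℝ} (hy : y ∈ Icc (0 : ℝ) 1) : 0 ≤ sqrtMDens γ y :=
  mul_nonneg (Real.sqrt_nonneg _) (mDens_nonneg γ hy)

lemma sqrtMDens_le {γ y : ℝ} (hy : y ∈ Ioo (0 : ℝ) 1) :
    sqrtMDens γ y ≤ Real.exp |γ| * ((√y)⁻¹ + (√(1 - y))⁻¹) := by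
  obtain ⟨hy0, hy1⟩ := hy
  set a := √y
  set b := √(1 - y)
  have ha : 0 < a := Real.sqrt_pos.2 hy0
  have hb : 0 < b := Real.sqrt_pos.2 (by linarith)
  have ha2 : a ^ 2 = y := Real.sq_sqrt hy0.le
  have hb2 : b ^ 2 = 1 - y := Real.sq_sqrt (by linarith)
  -- `a ≥ a²` and `b ≥ b²` since `a, b ≤ 1`, hence `a + b ≥ a² + b² = 1`.
  have hab : 1 ≤ a + b := by nlinarith
  have hexp : Real.exp (γ * y) ≤ Real.exp |γ| :=
    exp_mul_le_exp_abs γ (by rw [abs_of_pos hy0]; exact hy1.le)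
  have hsqrt : sqrtMDens γ y = Real.exp (γ * y) / (a * b) := by
    rw [sqrtMDens, mDens, Real.sqrt_mul hy0.le,
      show y * (1 - y) = (a * b) ^ 2 by rw [mul_pow, ha2, hb2]]
    field_simp
    rfl
  rw [hsqrt, inv_add_inv ha.ne' hb.ne', mul_div_assoc', div_le_div_iff_of_pos_right (by positivity)]
  nlinarith [Real.exp_pos |γ|]

lemma intervalIntegrable_sqrtMDens (γ : ℝ) : IntervalIntegrable (sqrtMDens γ) volume 0 1 := by
  have hrpow : IntervalIntegrable (fun y : ℝ => y ^ (-(1 / 2) : ℝ)) volume 0 1 :=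
    intervalIntegral.intervalIntegrable_rpow' (by norm_num)
  have hrpow' : IntervalIntegrable (fun y : ℝ => (1 - y) ^ (-(1 / 2) : ℝ)) volume 0 1 := by
    simpa using (hrpow.comp_sub_left 1).symm
  refine ((hrpow.add hrpow').const_mul (Real.exp |γ|)).mono_fun'
    (show Measurable (sqrtMDens γ) by unfold sqrtMDens mDens; fun_prop).aestronglyMeasurable ?_
  rw [uIoc_of_le zero_le_one]
  refine (ae_restrict_iff' measurableSet_Ioc).2 (.of_forall fun y hy => ?_)
  dsimp only
  rw [Real.norm_eq_abs, abs_of_nonneg (sqrtMDens_nonneg γ (Ioc_subset_Icc_self hy))]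
  rcases hy.2.lt_or_eq with hy1 | rfl
  · rw [Real.rpow_neg hy.1.le, Real.rpow_neg (by linarith), ← Real.sqrt_eq_rpow,
      ← Real.sqrt_eq_rpow]
    exact sqrtMDens_le ⟨hy.1, hy1⟩
  · simp only [sqrtMDens, sub_self, mul_zero, Real.sqrt_zero, zero_mul]
    positivity

section Eigenfunction

variable {γ lam : ℝ} {α : ℝ → ℝ}

lemma abs_le_of_eigen_of_majorant {w : ℝ → ℝ} {x : ℝ} (hlam : 0 ≤ lam)
    (hx : α x = lam * ∫ y in (0 : ℝ)..1, gFn γ x y * α y * mDens γ y)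
    (hw : IntervalIntegrable w volume 0 1)
    (hmaj : ∀ y ∈ Ioc (0 : ℝ) 1, |gFn γ x y * α y * mDens γ y| ≤ w y) :
    |α x| ≤ lam * ∫ y in (0 : ℝ)..1, w y := by
  have hint := intervalIntegral.norm_integral_le_of_norm_le zero_le_one
    (.of_forall fun y hy => (Real.norm_eq_abs _).trans_le (hmaj y hy)) hw
  rw [hx, abs_mul, abs_of_nonneg hlam]
  exact mul_le_mul_of_nonneg_left ((Real.norm_eq_abs _).symm.trans_le hint) hlam

lemma abs_gFn_mul_mul_mDens {x y : ℝ} (hx : x ∈ Icc (0 : ℝ) 1) (hy : y ∈ Icc (0 : ℝ) 1) :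
    |gFn γ x y * α y * mDens γ y| = gFn γ x y * |α y| * mDens γ y := by
  rw [abs_mul, abs_mul, abs_of_nonneg (gFn_nonneg γ hx hy), abs_of_nonneg (mDens_nonneg γ hy)]

lemma abs_eigen_le_sqrt (hlam : 0 ≤ lam)
    (hnorm : (∫ y in (0 : ℝ)..1, α y ^ 2 * mDens γ y) = 1)
    (heig : ∀ x ∈ Icc (0 : ℝ) 1, α x = lam * ∫ y in (0 : ℝ)..1, gFn γ x y * α y * mDens γ y)
    {x : ℝ} (hx : x ∈ Icc (0 : ℝ) 1) :
    |α x| ≤ lam * (gFnBound γ * ((∫ y in (0 : ℝ)..1, sqrtMDens γ y) + 1)) * √(x * (1 - x)) := by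
  have hα2 : IntervalIntegrable (fun y => α y ^ 2 * mDens γ y) volume 0 1 := by
    by_contra h
    rw [intervalIntegral.integral_undef h] at hnorm
    exact zero_ne_one hnorm
  set c := gFnBound γ * √(x * (1 - x))
  have hc : 0 ≤ c := mul_nonneg (gFnBound_nonneg γ) (Real.sqrt_nonneg _)
  have hmaj : ∀ y ∈ Ioc (0 : ℝ) 1, |gFn γ x y * α y * mDens γ y| ≤
      c * (sqrtMDens γ y + α y ^ 2 * mDens γ y) := by
    intro y hy
    have hy' := Ioc_subset_Icc_self hy
    have hm := mDens_nonneg γ hy'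
    have hα : |α y| ≤ 1 + α y ^ 2 := by nlinarith [sq_abs (α y), abs_nonneg (α y)]
    have hsqrt : √(y * (1 - y)) ≤ 1 := Real.sqrt_le_one.2 (by nlinarith [hy'.1, hy'.2])
    have hg0 := gFn_nonneg γ hx hy'
    have hg := gFn_le_sqrt γ hx hy'
    have hK := hg0.trans hg
    rw [abs_gFn_mul_mul_mDens hx hy']
    calc gFn γ x y * |α y| * mDens γ y
        ≤ gFnBound γ * (√(x * (1 - x)) * √(y * (1 - y))) * (1 + α y ^ 2) * mDens γ y := by
          gcongr
      _ = c * (sqrtMDens γ y + √(y * (1 - y)) * (α y ^ 2 * mDens γ y)) := by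
          rw [sqrtMDens]; ring
      _ ≤ c * (sqrtMDens γ y + α y ^ 2 * mDens γ y) :=
          mul_le_mul_of_nonneg_left
            (add_le_add le_rfl (mul_le_of_le_one_left (mul_nonneg (sq_nonneg _) hm) hsqrt)) hc
  have hw : IntervalIntegrable (fun y => c * (sqrtMDens γ y + α y ^ 2 * mDens γ y)) volume 0 1 :=
    ((intervalIntegrable_sqrtMDens γ).add hα2).const_mul c
  calc |α x| ≤ lam * ∫ y in (0 : ℝ)..1, c * (sqrtMDens γ y + α y ^ 2 * mDens γ y) :=
        abs_le_of_eigen_of_majorant hlam (heig x hx) hw hmaj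
    _ = _ := by
        rw [intervalIntegral.integral_const_mul,
          intervalIntegral.integral_add (intervalIntegrable_sqrtMDens γ) hα2, hnorm]
        ring

lemma abs_eigen_le_of_abs_le_sqrt {A : ℝ} (hlam : 0 ≤ lam)
    (heig : ∀ x ∈ Icc (0 : ℝ) 1, α x = lam * ∫ y in (0 : ℝ)..1, gFn γ x y * α y * mDens γ y)
    (hsqrt : ∀ y ∈ Icc (0 : ℝ) 1, |α y| ≤ A * √(y * (1 - y)))
    {x : ℝ} (hx : x ∈ Icc (0 : ℝ) 1) :
    |α x| ≤ lam * (gFnBound γ * A * ∫ y in (0 : ℝ)..1, sqrtMDens γ y) * (x * (1 - x)) := by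
  set c := gFnBound γ * (x * (1 - x)) * A
  have hmaj : ∀ y ∈ Ioc (0 : ℝ) 1, |gFn γ x y * α y * mDens γ y| ≤ c * sqrtMDens γ y := by
    intro y hy
    have hy' := Ioc_subset_Icc_self hy
    have hm := mDens_nonneg γ hy'
    have hK := mul_nonneg (gFnBound_nonneg γ) (mul_nonneg hx.1 (sub_nonneg.2 hx.2))
    have hg := gFn_le_mul_one_sub γ hx hy'
    have hα := hsqrt y hy'
    rw [abs_gFn_mul_mul_mDens hx hy']
    calc gFn γ x y * |α y| * mDens γ y
        ≤ gFnBound γ * (x * (1 - x)) * (A * √(y * (1 - y))) * mDens γ y := by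
          gcongr
      _ = c * sqrtMDens γ y := by rw [sqrtMDens]; ring
  calc |α x| ≤ lam * ∫ y in (0 : ℝ)..1, c * sqrtMDens γ y :=
        abs_le_of_eigen_of_majorant hlam (heig x hx)
          ((intervalIntegrable_sqrtMDens γ).const_mul c) hmaj
    _ = _ := by rw [intervalIntegral.integral_const_mul]; ring

end Eigenfunction

/-- there is a constant `C = C(γ)` such that every normalized
eigenfunction–eigenvalue pair `(α, λ)` of the Green operator satisfies
`|α(x)| ≤ C λ² x(1−x)` on `[0,1]`. -/
theorem green_eigenfunction_bound (γ : ℝ) :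
    ∃ C : ℝ, ∀ lam : ℝ, 0 < lam → ∀ α : ℝ → ℝ, Measurable α →
      (∫ y in (0 : ℝ)..1, α y ^ 2 * mDens γ y) = 1 →
      (∀ x ∈ Set.Icc (0 : ℝ) 1,
        α x = lam * ∫ y in (0 : ℝ)..1, gFn γ x y * α y * mDens γ y) →
      ∀ x ∈ Set.Icc (0 : ℝ) 1, |α x| ≤ C * lam ^ 2 * x * (1 - x) := by
  set J := ∫ y in (0 : ℝ)..1, sqrtMDens γ y
  refine ⟨gFnBound γ ^ 2 * (J + 1) * J, fun lam hlam α _ hnorm heig x hx => ?_⟩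
  have hsqrt := fun y hy => abs_eigen_le_sqrt hlam.le hnorm heig (x := y) hy
  calc |α x| ≤ lam * (gFnBound γ * (lam * (gFnBound γ * (J + 1))) * J) * (x * (1 - x)) :=
        abs_eigen_le_of_abs_le_sqrt hlam.le heig hsqrt hx
    _ = _ := by ring
end
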